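/- Let ζ ∈ (0,1). Every accumulation point of 𝒵 lies on the unit circle: if z belongs to the closure of 𝒵 but z ∉ 𝒵, then |z| = 1. -/

import Mathlib

/-- The pair `(P_n, Q_n)` of polynomials defined by `P_0 = Q_0 = 1`,
`P_{n+1} = (ζ Q_n + X P_n)²`, `Q_{n+1} = (Q_n + ζ X P_n)²`. -/
noncomputable def PQ (ζ : ℝ) : ℕ → Polynomial ℂ × Polynomial ℂ
  | 0 => (1, 1)
  | n + 1 =>
    (((ζ : ℂ) • (PQ ζ n).2 + Polynomial.X * (PQ ζ n).1) ^ 2,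
     ((PQ ζ n).2 + (ζ : ℂ) • (Polynomial.X * (PQ ζ n).1)) ^ 2)

noncomputable def Ppoly (ζ : ℝ) (n : ℕ) : Polynomial ℂ := (PQ ζ n).1

noncomputable def Qpoly (ζ : ℝ) (n : ℕ) : Polynomial ℂ := (PQ ζ n).2

/-- `R_n = ζ·X·P_n + Q_n`. -/
noncomputable def Rpoly (ζ : ℝ) (n : ℕ) : Polynomial ℂ :=
  (ζ : ℂ) • (Polynomial.X * Ppoly ζ n) + Qpoly ζ n

/-- `𝒵_n`, the set of complex roots of `R_n`. -/
def Zset (ζ : ℝ) (n : ℕ) : Set ℂ := {z : ℂ | (Rpoly ζ n).eval z = 0}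

/-- `𝒵 = ⋃ₙ 𝒵_n`. -/
def ZsetAll (ζ : ℝ) : Set ℂ := ⋃ n : ℕ, Zset ζ n

open Complex ComplexConjugate

/-!
Write `u_n = z P_n(z)` and `v_n = Q_n(z)`, so that `u_{n+1} = z (ζ v_n + u_n)²`,
`v_{n+1} = (v_n + ζ u_n)²` and `R_n(z) = ζ u_n + v_n`. Since
`‖v + ζ u‖² - ‖ζ v + u‖² = (1 - ζ²)(‖v‖² - ‖u‖²)`, the inequality `‖u_n‖ < ‖v_n‖` propagates
when `‖z‖ < 1`, which rules out `v_n = -ζ u_n`; the reverse inequality propagates when `‖z‖ > 1`.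

In the latter case the ratio `r_n = v_n / u_n` stays in the unit disc and satisfies
`r_{n+1} = φ(r_n)² / z` with the disc automorphism `φ(w) = (w + ζ) / (1 + ζ w)`. For the
pseudo-hyperbolic distance `δ(a, b) = ‖a - b‖ / ‖1 - conj a * b‖`, `φ` is an isometry, squaring
does not increase `δ` (Schwarz–Pick) and division by `z` contracts it by `2‖z‖ / (‖z‖² + 1) < 1`,
so `δ(r_{n+1}, r_n) ≤ (2‖z‖ / (‖z‖² + 1))ⁿ`. At a root `r_n = -ζ` and `r_{n+1} = 0`, whence
`δ(r_{n+1}, r_n) = |ζ|`. So outside a disc of radius `ρ > 1` only finitely many `R_n` have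
roots, and an accumulation point of `𝒵` outside `𝒵` lies neither inside nor outside the circle.
-/

noncomputable def pseudoHypDist (a b : ℂ) : ℝ := ‖a - b‖ / ‖1 - conj a * b‖

noncomputable def mobius (c w : ℂ) : ℂ := (w + c) / (1 + conj c * w)

theorem sq_norm_one_sub_conj_mul_sub_sq_norm_sub (a b : ℂ) :
    ‖1 - conj a * b‖ ^ 2 - ‖a - b‖ ^ 2 = (1 - ‖a‖ ^ 2) * (1 - ‖b‖ ^ 2) := by
  simp only [Complex.sq_norm, normSq_apply, sub_re, sub_im, mul_re, mul_im, one_re, one_im,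
    conj_re, conj_im]
  ring

theorem norm_sub_le_norm_one_sub_conj_mul {a b : ℂ} (ha : ‖a‖ ≤ 1) (hb : ‖b‖ ≤ 1) :
    ‖a - b‖ ≤ ‖1 - conj a * b‖ := by
  have h := sq_norm_one_sub_conj_mul_sub_sq_norm_sub a b
  rw [← pow_le_pow_iff_left₀ (norm_nonneg _) (norm_nonneg _) two_ne_zero]
  nlinarith [mul_nonneg (sub_nonneg.2 (pow_le_one₀ (norm_nonneg a) ha (n := 2)))
    (sub_nonneg.2 (pow_le_one₀ (norm_nonneg b) hb (n := 2)))]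

theorem norm_sub_lt_norm_one_sub_conj_mul {a b : ℂ} (ha : ‖a‖ < 1) (hb : ‖b‖ < 1) :
    ‖a - b‖ < ‖1 - conj a * b‖ := by
  have h := sq_norm_one_sub_conj_mul_sub_sq_norm_sub a b
  rw [← pow_lt_pow_iff_left₀ (norm_nonneg _) (norm_nonneg _) two_ne_zero]
  nlinarith [mul_pos (sub_pos.2 (pow_lt_one₀ (norm_nonneg a) ha two_ne_zero))
    (sub_pos.2 (pow_lt_one₀ (norm_nonneg b) hb two_ne_zero))]

theorem pseudoHypDist_le_one {a b : ℂ} (ha : ‖a‖ ≤ 1) (hb : ‖b‖ ≤ 1) : pseudoHypDist a b ≤ 1 :=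
  div_le_one_of_le₀ (norm_sub_le_norm_one_sub_conj_mul ha hb) (norm_nonneg _)

theorem pseudoHypDist_lt_one {a b : ℂ} (ha : ‖a‖ < 1) (hb : ‖b‖ < 1) : pseudoHypDist a b < 1 := by
  have h := norm_sub_lt_norm_one_sub_conj_mul ha hb
  exact (div_lt_one ((norm_nonneg _).trans_lt h)).2 h

@[simp] theorem pseudoHypDist_zero_left (b : ℂ) : pseudoHypDist 0 b = ‖b‖ := by
  simp [pseudoHypDist]

theorem pseudoHypDist_sq_sq (a b : ℂ) :
    pseudoHypDist (a ^ 2) (b ^ 2) = pseudoHypDist a b * pseudoHypDist (-a) b := by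
  have h₁ : a ^ 2 - b ^ 2 = (a - b) * -(-a - b) := by ring
  have h₂ : 1 - conj (a ^ 2) * b ^ 2 = (1 - conj a * b) * (1 - conj (-a) * b) := by
    simp only [map_pow, map_neg]; ring
  rw [pseudoHypDist, h₁, h₂, norm_mul, norm_mul, norm_neg, mul_div_mul_comm]
  rfl

theorem pseudoHypDist_sq_le {a b : ℂ} (ha : ‖a‖ ≤ 1) (hb : ‖b‖ ≤ 1) :
    pseudoHypDist (a ^ 2) (b ^ 2) ≤ pseudoHypDist a b := by
  rw [pseudoHypDist_sq_sq]
  exact mul_le_of_le_one_right (div_nonneg (norm_nonneg _) (norm_nonneg _))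
    (pseudoHypDist_le_one (by rwa [norm_neg]) hb)


theorem one_add_conj_mul_ne_zero {c w : ℂ} (hc : ‖c‖ < 1) (hw : ‖w‖ ≤ 1) :
    1 + conj c * w ≠ 0 := by
  intro h
  have : ‖conj c * w‖ < 1 := by
    rw [norm_mul, norm_conj]; nlinarith [norm_nonneg c, norm_nonneg w]
  rw [eq_neg_of_add_eq_zero_right h, norm_neg, norm_one] at this
  exact lt_irrefl _ this

@[simp] theorem mobius_neg_self (c : ℂ) : mobius c (-c) = 0 := by
  simp [mobius]

theorem norm_mobius (c w : ℂ) : ‖mobius c w‖ = pseudoHypDist (-c) w := by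
  rw [mobius, pseudoHypDist, norm_div, map_neg, neg_mul, sub_neg_eq_add,
    show -c - w = -(w + c) by ring, norm_neg]

theorem pseudoHypDist_mobius {c a b : ℂ} (hc : ‖c‖ < 1) (ha : ‖a‖ ≤ 1) (hb : ‖b‖ ≤ 1) :
    pseudoHypDist (mobius c a) (mobius c b) = pseudoHypDist a b := by
  have hDa := one_add_conj_mul_ne_zero hc ha
  have hDb := one_add_conj_mul_ne_zero hc hb
  have hDa' : 1 + c * conj a ≠ 0 := by
    simpa using (map_ne_zero (starRingEnd ℂ)).2 hDa
  have hK : 1 - c * conj c ≠ 0 := by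
    rw [mul_conj, ← ofReal_one, ← ofReal_sub, ofReal_ne_zero, ← Complex.sq_norm]
    nlinarith [norm_nonneg c]
  have hnum : mobius c a - mobius c b
      = (1 - c * conj c) * (a - b) / ((1 + conj c * a) * (1 + conj c * b)) := by
    rw [mobius, mobius, div_sub_div _ _ hDa hDb]; ring
  have hden : 1 - conj (mobius c a) * mobius c b
      = (1 - c * conj c) * (1 - conj a * b) / ((1 + c * conj a) * (1 + conj c * b)) := by
    rw [mobius, mobius, map_div₀]
    simp only [map_add, map_mul, map_one, conj_conj]
    rw [div_mul_div_comm, one_sub_div (mul_ne_zero hDa' hDb)]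
    ring
  have hconj : ‖1 + c * conj a‖ = ‖1 + conj c * a‖ := by
    rw [← norm_conj]; simp
  rw [pseudoHypDist, pseudoHypDist, hnum, hden]
  simp only [norm_div, norm_mul, hconj]
  field_simp [norm_ne_zero_iff.2 hK, norm_ne_zero_iff.2 hDa, norm_ne_zero_iff.2 hDb]

theorem norm_one_sub_mul_le {t : ℝ} {w : ℂ} (ht : 1 ≤ t) (hw : ‖w‖ ≤ 1) :
    (t + 1) * ‖1 - w‖ ≤ 2 * ‖(t : ℂ) - w‖ := by
  have key : (2 * ‖(t : ℂ) - w‖) ^ 2 - ((t + 1) * ‖1 - w‖) ^ 2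
      = (t - 1) * (2 * (t - 1) * (1 + w.re) + (t + 3) * (1 - ‖w‖ ^ 2)) := by
    simp only [mul_pow, Complex.sq_norm, normSq_apply, sub_re, sub_im, one_re, one_im,
      ofReal_re, ofReal_im]
    ring
  have hre : -1 ≤ w.re := by linarith [neg_abs_le w.re, abs_re_le_norm w]
  have hw2 : ‖w‖ ^ 2 ≤ 1 := pow_le_one₀ (norm_nonneg w) hw
  rw [← pow_le_pow_iff_left₀ (by positivity) (by positivity) two_ne_zero]
  nlinarith [mul_nonneg (sub_nonneg.2 ht) (add_nonneg
    (mul_nonneg (mul_nonneg zero_le_two (sub_nonneg.2 ht)) (neg_le_iff_add_nonneg'.1 hre))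
    (mul_nonneg (by linarith : (0 : ℝ) ≤ t + 3) (sub_nonneg.2 hw2)))]

theorem pseudoHypDist_div_le {A B z : ℂ} (hz : 1 ≤ ‖z‖) (hA : ‖A‖ < 1) (hB : ‖B‖ ≤ 1) :
    pseudoHypDist (A / z) (B / z) ≤ 2 * ‖z‖ / (‖z‖ ^ 2 + 1) * pseudoHypDist A B := by
  have hz0 : z ≠ 0 := norm_pos_iff.1 (zero_lt_one.trans_le hz)
  have hs : 0 < ‖z‖ := norm_pos_iff.2 hz0
  have hsub : A / z - B / z = (A - B) / z := by ring
  have hden : 1 - conj (A / z) * (B / z) = ((‖z‖ ^ 2 : ℝ) - conj A * B) / (‖z‖ ^ 2 : ℝ) := by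
    have hcz : conj z ≠ 0 := (map_ne_zero _).2 hz0
    rw [Complex.sq_norm, normSq_eq_conj_mul_self, map_div₀]
    field_simp
  rw [pseudoHypDist, pseudoHypDist, hsub, hden, norm_div, norm_div, norm_real,
    Real.norm_of_nonneg (by positivity)]
  set w := conj A * B
  have hw : ‖w‖ < 1 := by
    rw [norm_mul, norm_conj]; nlinarith [norm_nonneg A, norm_nonneg B]
  have h1w : 0 < ‖1 - w‖ := by
    rw [norm_pos_iff, sub_ne_zero]; intro h; rw [← h, norm_one] at hw; exact lt_irrefl _ hw
  have hkey := norm_one_sub_mul_le (one_le_pow₀ hz (n := 2)) hw.le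
  have hE : 0 < ‖((‖z‖ ^ 2 : ℝ) : ℂ) - w‖ := by nlinarith
  have hL : ‖A - B‖ / ‖z‖ / (‖((‖z‖ ^ 2 : ℝ) : ℂ) - w‖ / ‖z‖ ^ 2)
      = ‖A - B‖ * ‖z‖ / ‖((‖z‖ ^ 2 : ℝ) : ℂ) - w‖ := by
    field_simp
  rw [hL, div_mul_div_comm, div_le_div_iff₀ hE (by positivity)]
  nlinarith [mul_le_mul_of_nonneg_left hkey (mul_nonneg (norm_nonneg (A - B)) hs.le)]

theorem norm_mobius_lt_one {c w : ℂ} (hc : ‖c‖ < 1) (hw : ‖w‖ < 1) : ‖mobius c w‖ < 1 := by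
  rw [norm_mobius]
  exact pseudoHypDist_lt_one (by rwa [norm_neg]) hw

theorem pseudoHypDist_mobius_sq_div_le {c z a b : ℂ} (hc : ‖c‖ < 1) (hz : 1 ≤ ‖z‖)
    (ha : ‖a‖ < 1) (hb : ‖b‖ < 1) :
    pseudoHypDist (mobius c a ^ 2 / z) (mobius c b ^ 2 / z)
      ≤ 2 * ‖z‖ / (‖z‖ ^ 2 + 1) * pseudoHypDist a b := by
  have ha' := norm_mobius_lt_one hc ha
  have hb' := norm_mobius_lt_one hc hb
  calc pseudoHypDist (mobius c a ^ 2 / z) (mobius c b ^ 2 / z)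
      ≤ 2 * ‖z‖ / (‖z‖ ^ 2 + 1) * pseudoHypDist (mobius c a ^ 2) (mobius c b ^ 2) :=
        pseudoHypDist_div_le hz
          (by rw [norm_pow]; exact pow_lt_one₀ (norm_nonneg _) ha' two_ne_zero)
          (by rw [norm_pow]; exact pow_le_one₀ (norm_nonneg _) hb'.le)
    _ ≤ 2 * ‖z‖ / (‖z‖ ^ 2 + 1) * pseudoHypDist (mobius c a) (mobius c b) := by
        gcongr
        exact pseudoHypDist_sq_le ha'.le hb'.le
    _ = 2 * ‖z‖ / (‖z‖ ^ 2 + 1) * pseudoHypDist a b := by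
        rw [pseudoHypDist_mobius hc ha.le hb.le]

theorem norm_mul_add_lt_norm_add_mul {c : ℝ} (hc : |c| < 1) {u v : ℂ} (h : ‖u‖ < ‖v‖) :
    ‖c * v + u‖ < ‖v + c * u‖ := by
  have key : ‖v + c * u‖ ^ 2 - ‖c * v + u‖ ^ 2 = (1 - c ^ 2) * (‖v‖ ^ 2 - ‖u‖ ^ 2) := by
    simp only [Complex.sq_norm, normSq_apply, add_re, add_im, mul_re, mul_im, ofReal_re,
      ofReal_im]
    ring
  have hc2 : c ^ 2 < 1 := by rw [← sq_abs]; nlinarith [abs_nonneg c]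
  rw [← pow_lt_pow_iff_left₀ (norm_nonneg _) (norm_nonneg _) two_ne_zero]
  nlinarith [mul_pos (sub_pos.2 hc2) (sub_pos.2 (pow_lt_pow_left₀ h (norm_nonneg u) two_ne_zero))]

-- `u_n` and `v_n` of the sketch above; `evalRatio` below is `r_n`.
noncomputable def xPeval (ζ : ℝ) (z : ℂ) (n : ℕ) : ℂ := z * (Ppoly ζ n).eval z

noncomputable def Qeval (ζ : ℝ) (z : ℂ) (n : ℕ) : ℂ := (Qpoly ζ n).eval z

section Evaluation

variable (ζ : ℝ) (z : ℂ) (n : ℕ)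

@[simp] theorem xPeval_zero : xPeval ζ z 0 = z := by simp [xPeval, Ppoly, PQ]

@[simp] theorem Qeval_zero : Qeval ζ z 0 = 1 := by simp [Qeval, Qpoly, PQ]

theorem xPeval_succ : xPeval ζ z (n + 1) = z * (ζ * Qeval ζ z n + xPeval ζ z n) ^ 2 := by
  simp [xPeval, Qeval, Ppoly, Qpoly, PQ]

theorem Qeval_succ : Qeval ζ z (n + 1) = (Qeval ζ z n + ζ * xPeval ζ z n) ^ 2 := by
  simp [xPeval, Qeval, Ppoly, Qpoly, PQ]

theorem eval_Rpoly : (Rpoly ζ n).eval z = ζ * xPeval ζ z n + Qeval ζ z n := by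
  simp [Rpoly, xPeval, Qeval]

theorem Rpoly_ne_zero : Rpoly ζ n ≠ 0 := by
  have hQ : ∀ m, Qeval ζ 0 m = 1 := by
    intro m
    induction m with
    | zero => exact Qeval_zero ζ 0
    | succ m ih => simp [Qeval_succ, ih, xPeval]
  intro h
  have h0 := eval_Rpoly ζ 0 n
  simp [h, xPeval, hQ] at h0

end Evaluation

section Invariants

variable {ζ : ℝ} (hζ : |ζ| < 1) {z : ℂ}
include hζ

theorem norm_xPeval_lt_norm_Qeval (hz : ‖z‖ < 1) (n : ℕ) :
    ‖xPeval ζ z n‖ < ‖Qeval ζ z n‖ := by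
  induction n with
  | zero => simpa using hz
  | succ n ih =>
    rw [xPeval_succ, Qeval_succ, norm_mul, norm_pow, norm_pow]
    calc ‖z‖ * ‖ζ * Qeval ζ z n + xPeval ζ z n‖ ^ 2
        ≤ ‖ζ * Qeval ζ z n + xPeval ζ z n‖ ^ 2 := mul_le_of_le_one_left (sq_nonneg _) hz.le
      _ < ‖Qeval ζ z n + ζ * xPeval ζ z n‖ ^ 2 :=
        pow_lt_pow_left₀ (norm_mul_add_lt_norm_add_mul hζ ih) (norm_nonneg _) two_ne_zero

theorem eval_Rpoly_ne_zero_of_norm_lt_one (hz : ‖z‖ < 1) (n : ℕ) :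
    (Rpoly ζ n).eval z ≠ 0 := by
  intro h
  have hQ : Qeval ζ z n = -(ζ * xPeval ζ z n) := by rw [eval_Rpoly] at h; linear_combination h
  have := norm_xPeval_lt_norm_Qeval hζ hz n
  rw [hQ, norm_neg, norm_mul, norm_real, Real.norm_eq_abs] at this
  nlinarith [norm_nonneg (xPeval ζ z n)]

theorem norm_Qeval_lt_norm_xPeval (hz : 1 < ‖z‖) (n : ℕ) :
    ‖Qeval ζ z n‖ < ‖xPeval ζ z n‖ := by
  induction n with
  | zero => simpa using hz
  | succ n ih =>
    have h := norm_mul_add_lt_norm_add_mul hζ ih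
    rw [add_comm, add_comm (xPeval ζ z n)] at h
    rw [xPeval_succ, Qeval_succ, norm_mul, norm_pow, norm_pow]
    calc ‖Qeval ζ z n + ζ * xPeval ζ z n‖ ^ 2
        < ‖ζ * Qeval ζ z n + xPeval ζ z n‖ ^ 2 := pow_lt_pow_left₀ h (norm_nonneg _) two_ne_zero
      _ ≤ ‖z‖ * ‖ζ * Qeval ζ z n + xPeval ζ z n‖ ^ 2 := le_mul_of_one_le_left (sq_nonneg _) hz.le

end Invariants

noncomputable def evalRatio (ζ : ℝ) (z : ℂ) (n : ℕ) : ℂ := Qeval ζ z n / xPeval ζ z n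

section OutsideDisc

variable {ζ : ℝ} (hζ : |ζ| < 1) {z : ℂ} (hz : 1 < ‖z‖)
include hζ hz

theorem norm_evalRatio_lt_one (n : ℕ) : ‖evalRatio ζ z n‖ < 1 := by
  have h := norm_Qeval_lt_norm_xPeval hζ hz n
  rw [evalRatio, norm_div]
  exact (div_lt_one ((norm_nonneg _).trans_lt h)).2 h

theorem evalRatio_succ (n : ℕ) :
    evalRatio ζ z (n + 1) = mobius ζ (evalRatio ζ z n) ^ 2 / z := by
  have hu : xPeval ζ z n ≠ 0 :=
    norm_pos_iff.1 ((norm_nonneg _).trans_lt (norm_Qeval_lt_norm_xPeval hζ hz n))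
  have hd : ζ * Qeval ζ z n + xPeval ζ z n ≠ 0 := by
    have h := norm_mul_add_lt_norm_add_mul hζ (norm_Qeval_lt_norm_xPeval hζ hz n)
    rw [add_comm, add_comm (xPeval ζ z n)] at h
    exact norm_pos_iff.1 ((norm_nonneg _).trans_lt h)
  have hz0 : z ≠ 0 := norm_pos_iff.1 (zero_lt_one.trans hz)
  rw [evalRatio, evalRatio, xPeval_succ, Qeval_succ, mobius, conj_ofReal]
  field_simp
  ring

theorem pseudoHypDist_evalRatio_succ_le (n : ℕ) :
    pseudoHypDist (evalRatio ζ z (n + 1)) (evalRatio ζ z n) ≤ (2 * ‖z‖ / (‖z‖ ^ 2 + 1)) ^ n := by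
  have hc : ‖(ζ : ℂ)‖ < 1 := by rwa [norm_real, Real.norm_eq_abs]
  induction n with
  | zero => simpa using (pseudoHypDist_lt_one (norm_evalRatio_lt_one hζ hz 1)
      (norm_evalRatio_lt_one hζ hz 0)).le
  | succ n ih =>
    have h := pseudoHypDist_mobius_sq_div_le hc hz.le (norm_evalRatio_lt_one hζ hz (n + 1))
      (norm_evalRatio_lt_one hζ hz n)
    rw [← evalRatio_succ hζ hz, ← evalRatio_succ hζ hz] at h
    rw [pow_succ']
    exact h.trans (by gcongr)

theorem abs_le_pow_of_eval_Rpoly_eq_zero {n : ℕ} (h : (Rpoly ζ n).eval z = 0) :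
    |ζ| ≤ (2 * ‖z‖ / (‖z‖ ^ 2 + 1)) ^ n := by
  have hu : xPeval ζ z n ≠ 0 :=
    norm_pos_iff.1 ((norm_nonneg _).trans_lt (norm_Qeval_lt_norm_xPeval hζ hz n))
  have hr : evalRatio ζ z n = -ζ := by
    rw [eval_Rpoly] at h
    rw [evalRatio, div_eq_iff hu]
    linear_combination h
  have hr' : evalRatio ζ z (n + 1) = 0 := by
    rw [evalRatio_succ hζ hz, hr, mobius_neg_self]; simp
  simpa [hr, hr', pseudoHypDist_zero_left] using pseudoHypDist_evalRatio_succ_le hζ hz n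

end OutsideDisc

theorem two_mul_div_sq_add_one_le {ρ s : ℝ} (hρ : 1 ≤ ρ) (hs : ρ ≤ s) :
    2 * s / (s ^ 2 + 1) ≤ 2 * ρ / (ρ ^ 2 + 1) := by
  rw [div_le_div_iff₀ (by positivity) (by positivity)]
  nlinarith [mul_nonneg (sub_nonneg.2 hs) (by nlinarith : (0 : ℝ) ≤ s * ρ - 1)]

theorem Zset_finite (ζ : ℝ) (n : ℕ) : (Zset ζ n).Finite :=
  Polynomial.finite_setOfPred_isRoot (Rpoly_ne_zero ζ n)

theorem one_le_norm_of_mem_ZsetAll {ζ : ℝ} (hζ : |ζ| < 1) {w : ℂ} (hw : w ∈ ZsetAll ζ) :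
    1 ≤ ‖w‖ := by
  obtain ⟨n, hn⟩ := Set.mem_iUnion.1 hw
  exact not_lt.1 fun h => eval_Rpoly_ne_zero_of_norm_lt_one hζ h n hn

theorem exists_ZsetAll_inter_subset {ζ : ℝ} (hζ0 : ζ ≠ 0) (hζ : |ζ| < 1) {ρ : ℝ} (hρ : 1 < ρ) :
    ∃ N, {w | ρ < ‖w‖} ∩ ZsetAll ζ ⊆ ⋃ n ∈ Finset.range N, Zset ζ n := by
  have hκ : 2 * ρ / (ρ ^ 2 + 1) < 1 := by
    rw [div_lt_one (by positivity)]; nlinarith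
  obtain ⟨N, hN⟩ := exists_pow_lt_of_lt_one (abs_pos.2 hζ0) hκ
  refine ⟨N, ?_⟩
  rintro w ⟨hρw, hw⟩
  obtain ⟨n, hn⟩ := Set.mem_iUnion.1 hw
  refine Set.mem_biUnion (Finset.mem_range.2 (not_le.1 fun hNn => ?_)) hn
  have hκ0 : 0 ≤ 2 * ρ / (ρ ^ 2 + 1) := by positivity
  have hle := calc |ζ| ≤ (2 * ‖w‖ / (‖w‖ ^ 2 + 1)) ^ n :=
        abs_le_pow_of_eval_Rpoly_eq_zero hζ (hρ.trans hρw) hn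
    _ ≤ (2 * ρ / (ρ ^ 2 + 1)) ^ n :=
        pow_le_pow_left₀ (by positivity) (two_mul_div_sq_add_one_le hρ.le hρw.le) n
    _ ≤ (2 * ρ / (ρ ^ 2 + 1)) ^ N := pow_le_pow_of_le_one hκ0 hκ.le hNn
  exact (not_lt.2 hle) hN

/-- Every accumulation point of `𝒵 = ⋃ₙ 𝒵ₙ` lies on the unit circle. -/
theorem stmt8 (ζ : ℝ) (hζ0 : 0 < ζ) (hζ1 : ζ < 1) (z : ℂ)
    (hz : z ∈ closure (ZsetAll ζ)) (hz' : z ∉ ZsetAll ζ) :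
    ‖z‖ = 1 := by
  have hζ : |ζ| < 1 := abs_lt.2 ⟨by linarith, hζ1⟩
  rcases lt_trichotomy ‖z‖ 1 with hlt | heq | hgt
  · obtain ⟨w, hw1, hw⟩ :=
      mem_closure_iff.1 hz _ (isOpen_lt continuous_norm continuous_const) hlt
    exact absurd (one_le_norm_of_mem_ZsetAll hζ hw) (not_le.2 hw1)
  · exact heq
  · obtain ⟨ρ, h1ρ, hρz⟩ := exists_between hgt
    obtain ⟨N, hN⟩ := exists_ZsetAll_inter_subset hζ0.ne' hζ h1ρ
    have hF : IsClosed (⋃ n ∈ Finset.range N, Zset ζ n) :=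
      (Set.Finite.biUnion (Finset.finite_toSet _) fun n _ => Zset_finite ζ n).isClosed
    have hzF : z ∈ ⋃ n ∈ Finset.range N, Zset ζ n :=
      closure_minimal hN hF ((isOpen_lt continuous_const continuous_norm).inter_closure ⟨hρz, hz⟩)
    exact absurd (Set.iUnion₂_subset_iUnion _ _ hzF) hz'
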